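/- Let 0 < p ≤ 1, let (M,d) be a metric space with base point 0, let C ≥ 0, and let φ : P(M) → ℝ be a linear functional. Then |φ(μ)| ≤ C·‖μ‖_p for all μ ∈ P(M) if and only if the function f : M → ℝ defined by f(x) = φ(δ(x)) satisfies f(0) = 0, |f(x) − f(y)| ≤ C·d(x,y) for all x, y ∈ M, and φ(μ) = Σ_{x∈M} μ(x)·f(x) for all μ ∈ P(M). (The dual of F_p(M) is canonically and isometrically identified with the space Lip_0(M) of Lipschitz functions on M vanishing at the base point; in particular F_p(M) and its Banach envelope F(M) have the same dual.) -/

import Mathlib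

open scoped BigOperators Classical

noncomputable section

/-- The point mass `δ(x)` in the free space construction: the indicator function of `{x}`
if `x ≠ base`, and `0` if `x = base`. -/
def freeDelta {M : Type*} (base x : M) : M → ℝ :=
  fun z => if x = base then 0 else if z = x then 1 else 0

/-- The set of admissible quantities `(∑ j |a_j|^p)^{1/p}` arising from expansions
`μ = ∑ j a_j (δ(x_j) - δ(y_j))/d(x_j, y_j)` with all points `x_j ≠ y_j` lying in `N`. -/
def freeNormSet {M : Type*} [MetricSpace M] (base : M) (N : Set M) (p : ℝ) (μ : M → ℝ) :
    Set ℝ :=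
  {r | ∃ (n : ℕ) (a : Fin n → ℝ) (x y : Fin n → M),
    (∀ j, x j ∈ N) ∧ (∀ j, y j ∈ N) ∧ (∀ j, x j ≠ y j) ∧
    μ = (fun z => ∑ j, a j *
      ((freeDelta base (x j) z - freeDelta base (y j) z) / dist (x j) (y j))) ∧
    r = (∑ j, |a j| ^ p) ^ (1 / p)}

/-- The Lipschitz-free `p`-norm of `μ` computed with expansions supported on `N ⊆ M`. -/
def freeNormOn {M : Type*} [MetricSpace M] (base : M) (N : Set M) (p : ℝ) (μ : M → ℝ) : ℝ :=
  sInf (freeNormSet base N p μ)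

/-- The Lipschitz-free `p`-norm of `μ ∈ P(M)`. -/
def freeNorm {M : Type*} [MetricSpace M] (base : M) (p : ℝ) (μ : M → ℝ) : ℝ :=
  freeNormOn base Set.univ p μ


/-- The space `P(M)` of finitely supported real functions on `M` vanishing at the base
point, as a submodule of `M → ℝ`. -/
def freeSpan (M : Type*) [MetricSpace M] (base : M) : Submodule ℝ (M → ℝ) where
  carrier := {μ | (Function.support μ).Finite ∧ μ base = 0}
  add_mem' := by
    rintro a b ⟨ha, ha0⟩ ⟨hb, hb0⟩
    exact ⟨(ha.union hb).subset (Function.support_add a b), by simp [ha0, hb0]⟩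
  zero_mem' := ⟨by simp, rfl⟩
  smul_mem' := by
    rintro c a ⟨ha, ha0⟩
    refine ⟨ha.subset ?_, by simp [ha0]⟩
    intro z hz
    simp only [Function.mem_support, Pi.smul_apply, smul_eq_mul] at hz
    exact Function.mem_support.mpr fun h => hz (by simp [h])

lemma freeDelta_mem_freeSpan {M : Type*} [MetricSpace M] (base x : M) :
    freeDelta base x ∈ freeSpan M base := by
  constructor
  · apply Set.Finite.subset (Set.finite_singleton x)
    intro z hz
    simp only [Function.mem_support, freeDelta] at hz
    split_ifs at hz with h1 h2
    · exact absurd rfl hz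
    · simp [h2]
    · exact absurd rfl hz
  · simp only [freeDelta]
    split_ifs with h1 h2
    · rfl
    · exact absurd h2.symm h1
    · rfl

/-
Proof idea: if `|φ μ| ≤ C ‖μ‖_p`, then `f = φ ∘ δ` is `C`-Lipschitz because the one-term
expansion `δ(x) - δ(y) = d(x,y) · (δ(x) - δ(y)) / d(x,y)` gives `‖δ(x) - δ(y)‖_p ≤ d(x,y)`.
Conversely, if `f` is `C`-Lipschitz, any expansion `μ = ∑ a_j (δ(x_j) - δ(y_j)) / d(x_j,y_j)`
gives `|φ μ| ≤ C ∑ |a_j| ≤ C (∑ |a_j|^p)^(1/p)`, as the `ℓ_p` quasi-norm dominates the `ℓ_1`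
norm for `p ≤ 1`; taking the infimum over expansions bounds `|φ μ|` by `C ‖μ‖_p`. The pairing
formula is linearity of `φ` applied to `μ = ∑ μ(x) δ(x)`.
-/

open Finset

namespace Real

theorem rpow_sum_le_sum_rpow {ι : Type*} (s : Finset ι) {f : ι → ℝ} (hf : ∀ i ∈ s, 0 ≤ f i)
    {p : ℝ} (hp0 : 0 < p) (hp1 : p ≤ 1) : (∑ i ∈ s, f i) ^ p ≤ ∑ i ∈ s, f i ^ p :=
  le_sum_of_subadditive_on_pred (· ^ p) (0 ≤ ·) (by simp [zero_rpow hp0.ne'])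
    (fun _ _ hx hy => rpow_add_le_add_rpow hx hy hp0.le hp1) (fun _ _ => add_nonneg) f hf

theorem sum_le_sum_rpow_rpow_one_div {ι : Type*} (s : Finset ι) {f : ι → ℝ}
    (hf : ∀ i ∈ s, 0 ≤ f i) {p : ℝ} (hp0 : 0 < p) (hp1 : p ≤ 1) :
    ∑ i ∈ s, f i ≤ (∑ i ∈ s, f i ^ p) ^ (1 / p) := by
  have hsum : 0 ≤ ∑ i ∈ s, f i := sum_nonneg hf
  calc ∑ i ∈ s, f i = ((∑ i ∈ s, f i) ^ p) ^ (1 / p) := by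
        rw [← rpow_mul hsum, mul_one_div_cancel hp0.ne', rpow_one]
    _ ≤ (∑ i ∈ s, f i ^ p) ^ (1 / p) := by
        gcongr
        exact rpow_sum_le_sum_rpow s hf hp0 hp1

end Real

namespace freeSpan

variable {M : Type*} {base : M}

theorem freeDelta_self (base : M) : freeDelta base base = 0 := by
  funext z; simp [freeDelta]

theorem sum_mul_freeDelta {μ : M → ℝ} (h0 : μ base = 0) {S : Finset M}
    (hS : Function.support μ ⊆ S) (z : M) : ∑ x ∈ S, μ x * freeDelta base x z = μ z := by
  have hterm : ∀ x, μ x * freeDelta base x z = if x = z then μ z else 0 := by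
    intro x
    by_cases hxb : x = base <;> by_cases hxz : x = z <;> simp_all [freeDelta, eq_comm]
  rw [sum_congr rfl fun x _ => hterm x, sum_ite_eq' S z]
  split_ifs with hz
  · rfl
  · exact (Function.notMem_support.mp fun h => hz (hS h)).symm

variable [MetricSpace M]

def delta (base x : M) : freeSpan M base := ⟨freeDelta base x, freeDelta_mem_freeSpan base x⟩

theorem delta_self (base : M) : delta base base = 0 :=
  Subtype.ext (freeDelta_self base)

theorem sum_smul_delta (μ : freeSpan M base) {S : Finset M}
    (hS : Function.support (μ : M → ℝ) ⊆ S) : ∑ x ∈ S, (μ : M → ℝ) x • delta base x = μ := by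
  ext z
  simpa [Submodule.coe_sum, delta] using sum_mul_freeDelta μ.2.2 hS z

theorem _root_.LinearMap.apply_eq_finsum_mul_delta (φ : freeSpan M base →ₗ[ℝ] ℝ)
    (μ : freeSpan M base) : φ μ = ∑ᶠ x, (μ : M → ℝ) x * φ (delta base x) := by
  have hfin : (Function.support (μ : M → ℝ)).Finite := μ.2.1
  rw [finsum_eq_sum_of_support_subset _ (s := hfin.toFinset) fun x hx => by
    simpa using left_ne_zero_of_mul hx]
  conv_lhs => rw [← sum_smul_delta μ (S := hfin.toFinset) (by simp)]
  simp [map_sum, map_smul]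

theorem eq_sum_smul_delta_sub_delta {ι : Type*} [Fintype ι] {μ : freeSpan M base}
    {a : ι → ℝ} {x y : ι → M} (hμ : (μ : M → ℝ) = fun z => ∑ i, a i *
      ((freeDelta base (x i) z - freeDelta base (y i) z) / dist (x i) (y i))) :
    μ = ∑ i, (a i / dist (x i) (y i)) • (delta base (x i) - delta base (y i)) := by
  ext z
  simp only [Submodule.coe_sum, Submodule.coe_smul, Finset.sum_apply, Pi.smul_apply, hμ]
  refine sum_congr rfl fun i _ => ?_
  simp only [delta, AddSubgroupClass.coe_sub, Pi.sub_apply, smul_eq_mul]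
  ring

theorem mem_freeNormSet_of_fintype {ι : Type*} [Fintype ι] {N : Set M} {p : ℝ} {μ : M → ℝ}
    (a : ι → ℝ) {x y : ι → M} (hxN : ∀ i, x i ∈ N) (hyN : ∀ i, y i ∈ N)
    (hxy : ∀ i, x i ≠ y i) (hμ : μ = fun z => ∑ i, a i *
      ((freeDelta base (x i) z - freeDelta base (y i) z) / dist (x i) (y i))) :
    (∑ i, |a i| ^ p) ^ (1 / p) ∈ freeNormSet base N p μ := by
  let e := (Fintype.equivFin ι).symm
  refine ⟨Fintype.card ι, a ∘ e, x ∘ e, y ∘ e, fun _ => hxN _, fun _ => hyN _, fun _ => hxy _,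
    ?_, ?_⟩
  · rw [hμ]
    funext z
    exact (e.sum_comp fun i => a i *
      ((freeDelta base (x i) z - freeDelta base (y i) z) / dist (x i) (y i))).symm
  · rw [Function.comp_def, e.sum_comp fun i => |a i| ^ p]

theorem freeNormSet_nonempty {N : Set M} (hbase : base ∈ N) (p : ℝ) (μ : freeSpan M base)
    (hμN : Function.support (μ : M → ℝ) ⊆ N) : (freeNormSet base N p μ).Nonempty := by
  have hfin : (Function.support (μ : M → ℝ)).Finite := μ.2.1
  let S := hfin.toFinset
  have hne : ∀ x : S, (x : M) ≠ base := fun x hx =>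
    hfin.mem_toFinset.mp x.2 (by rw [hx]; exact μ.2.2)
  -- the expansion `μ = ∑ x ∈ supp μ, μ(x) d(x,0) · (δ(x) - δ(0)) / d(x,0)`
  refine ⟨_, mem_freeNormSet_of_fintype (fun x : S => (μ : M → ℝ) x * dist (x : M) base)
    (fun x => hμN (hfin.mem_toFinset.mp x.2)) (fun _ => hbase) hne ?_⟩
  funext z
  rw [freeDelta_self, ← sum_mul_freeDelta μ.2.2 (S := S) (by simp [S]) z,
    ← sum_coe_sort S]
  refine sum_congr rfl fun x _ => ?_
  simp only [Pi.zero_apply, sub_zero]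
  field_simp [dist_ne_zero.mpr (hne x)]

theorem freeNormSet_nonneg {N : Set M} {p : ℝ} {μ : M → ℝ} {r : ℝ}
    (hr : r ∈ freeNormSet base N p μ) : 0 ≤ r := by
  obtain ⟨n, a, x, y, -, -, -, -, rfl⟩ := hr
  positivity

theorem freeNorm_sub_le_dist {p : ℝ} (hp0 : 0 < p) {x y : M} (hxy : x ≠ y) :
    freeNorm base p (freeDelta base x - freeDelta base y) ≤ dist x y := by
  refine csInf_le ⟨0, fun _ => freeNormSet_nonneg⟩ ?_
  convert mem_freeNormSet_of_fintype (base := base) (N := Set.univ) (p := p)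
    (fun _ : Unit => dist x y) (fun _ => trivial) (fun _ => trivial) (fun _ => hxy) ?_
  · simp [← Real.rpow_mul dist_nonneg, mul_inv_cancel₀ hp0.ne']
  · funext z
    simp [mul_div_cancel₀ _ (dist_ne_zero.mpr hxy)]

theorem abs_apply_le_of_mem_freeNormSet {p C : ℝ} (hp0 : 0 < p) (hp1 : p ≤ 1) (hC : 0 ≤ C)
    {φ : freeSpan M base →ₗ[ℝ] ℝ}
    (hφ : ∀ x y, |φ (delta base x) - φ (delta base y)| ≤ C * dist x y)
    {N : Set M} {μ : freeSpan M base} {r : ℝ} (hr : r ∈ freeNormSet base N p μ) :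
    |φ μ| ≤ C * r := by
  obtain ⟨n, a, x, y, -, -, hxy, hμ, rfl⟩ := hr
  have hd : ∀ j, 0 < dist (x j) (y j) := fun j => dist_pos.mpr (hxy j)
  rw [eq_sum_smul_delta_sub_delta hμ]
  simp only [map_sum, map_smul, map_sub, smul_eq_mul]
  calc |∑ j, a j / dist (x j) (y j) * (φ (delta base (x j)) - φ (delta base (y j)))|
      ≤ ∑ j, |a j| / dist (x j) (y j) * (C * dist (x j) (y j)) := by
        refine (abs_sum_le_sum_abs _ _).trans (sum_le_sum fun j _ => ?_)
        rw [abs_mul, abs_div, abs_of_pos (hd j)]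
        gcongr
        exact hφ _ _
    _ = C * ∑ j, |a j| := by
        rw [mul_sum]
        refine sum_congr rfl fun j _ => ?_
        field_simp [(hd j).ne']
    _ ≤ C * (∑ j, |a j| ^ p) ^ (1 / p) := by
        gcongr
        exact Real.sum_le_sum_rpow_rpow_one_div _ (fun j _ => abs_nonneg (a j)) hp0 hp1

theorem abs_apply_le_mul_freeNorm {p C : ℝ} (hp0 : 0 < p) (hp1 : p ≤ 1) (hC : 0 ≤ C)
    {φ : freeSpan M base →ₗ[ℝ] ℝ}
    (hφ : ∀ x y, |φ (delta base x) - φ (delta base y)| ≤ C * dist x y)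
    (μ : freeSpan M base) : |φ μ| ≤ C * freeNorm base p μ := by
  rw [freeNorm, freeNormOn, ← smul_eq_mul, ← Real.sInf_smul_of_nonneg hC]
  refine le_csInf (freeNormSet_nonempty (Set.mem_univ base) p μ (Set.subset_univ _)).smul_set ?_
  rintro _ ⟨r, hr, rfl⟩
  exact abs_apply_le_of_mem_freeNormSet hp0 hp1 hC hφ hr

end freeSpan

/-- A linear functional `φ` on `P(M)` is bounded by `C·‖·‖_p` iff it is
given by pairing with a `C`-Lipschitz function vanishing at the base point; the dual of
`F_p(M)` is canonically isometric to `Lip_0(M)`. -/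
theorem dual_eq_Lip0 {M : Type*} [MetricSpace M] (base : M) (p : ℝ)
    (hp0 : 0 < p) (hp1 : p ≤ 1) (C : ℝ) (hC : 0 ≤ C)
    (φ : freeSpan M base →ₗ[ℝ] ℝ) :
    (∀ μ : freeSpan M base, |φ μ| ≤ C * freeNorm base p (μ : M → ℝ)) ↔
      ((φ ⟨freeDelta base base, freeDelta_mem_freeSpan base base⟩ = 0) ∧
       (∀ x y : M, |φ ⟨freeDelta base x, freeDelta_mem_freeSpan base x⟩ -
          φ ⟨freeDelta base y, freeDelta_mem_freeSpan base y⟩| ≤ C * dist x y) ∧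
       (∀ μ : freeSpan M base,
          φ μ = ∑ᶠ x, (μ : M → ℝ) x *
            φ ⟨freeDelta base x, freeDelta_mem_freeSpan base x⟩)) := by
  refine ⟨fun hφ => ⟨?_, fun x y => ?_, φ.apply_eq_finsum_mul_delta⟩,
    fun ⟨_, hLip, _⟩ => freeSpan.abs_apply_le_mul_freeNorm hp0 hp1 hC hLip⟩
  · exact (congrArg φ (freeSpan.delta_self base)).trans φ.map_zero
  · rcases eq_or_ne x y with rfl | hxy
    · simp
    calc |φ (freeSpan.delta base x) - φ (freeSpan.delta base y)|
        = |φ (freeSpan.delta base x - freeSpan.delta base y)| := by rw [map_sub]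
      _ ≤ C * freeNorm base p (freeDelta base x - freeDelta base y) := hφ _
      _ ≤ C * dist x y := by
        gcongr
        exact freeSpan.freeNorm_sub_le_dist hp0 hxy
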